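/- arXiv:2311.11648 — 3 statements merged into one kernel-verified Lean document; each statement's English description precedes it below -/
import Mathlib

section
/- Let V : ℝ^N → ℝ be continuous, radial, radially non-decreasing near 0, and let Υ ∈ C³ be a positive radial solution of −ΔΥ + V Υ = μ₁ Υ³ with a strict local maximum at the origin. Then for each coordinate direction i, ∂²_{ii}Υ(0) < 0; in particular ΔΥ(0) ≠ 0. -/
open MeasureTheory Filter Topology

/-- Laplacian as the sum of second derivatives along the coordinate directions. -/
noncomputable def lap {N : ℕ} (f : EuclideanSpace ℝ (Fin N) → ℝ)
    (x : EuclideanSpace ℝ (Fin N)) : ℝ :=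
  ∑ i : Fin N, iteratedDeriv 2 (fun t : ℝ => f (x + t • EuclideanSpace.single i 1)) 0

/-!
Write `Υ x = g ‖x‖`. If `g''(0) ≥ 0`, then `ΔΥ(0) = N g''(0) ≥ 0`, i.e. `V(0) ≥ μ₁ Υ(0)²`; since `V`
increases and `Υ` decreases away from the origin, the equation `ΔΥ = Υ (V - μ₁ Υ²)` then gives
`ΔΥ ≥ 0` on a small ball. In radial form `ΔΥ = t^{1-N} (t^{N-1} g')'`, and `g'(0) = 0` because `g` is
even, so `g' ≥ 0` near `0`: `g` is non-decreasing, contradicting the strict maximum at the origin.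
Hence `g''(0) < 0`, and `ΔΥ(0) = N g''(0) < 0`.
-/

open Set

/-- The Laplacian of `x ↦ g ‖x‖` in dimension `n + 1`, evaluated at `‖x‖ = t`. -/
noncomputable def radialLaplacian (n : ℕ) (g : ℝ → ℝ) (t : ℝ) : ℝ :=
  deriv (deriv g) t + n * (deriv g t / t)

theorem hasDerivAt_pow_mul_deriv {g : ℝ → ℝ} (n : ℕ) {t : ℝ} (ht : t ≠ 0)
    (hg : DifferentiableAt ℝ (deriv g) t) :
    HasDerivAt (fun s => s ^ n * deriv g s) (t ^ n * radialLaplacian n g t) t := by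
  refine ((hasDerivAt_pow n t).fun_mul hg.hasDerivAt).congr_deriv ?_
  rcases n with _ | n
  · simp [radialLaplacian]
  · simp only [radialLaplacian, Nat.add_sub_cancel, pow_succ]
    field_simp
    ring

theorem deriv_nonneg_of_radialLaplacian_nonneg {g : ℝ → ℝ} (hg : ContDiff ℝ 2 g) (n : ℕ)
    {δ : ℝ} (hg0 : deriv g 0 = 0) (h : ∀ t ∈ Ioo 0 δ, 0 ≤ radialLaplacian n g t) :
    ∀ t ∈ Ioo 0 δ, 0 ≤ deriv g t := by
  have hg' := hg.differentiable_deriv_two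
  have hmono : MonotoneOn (fun s => s ^ n * deriv g s) (Ico 0 δ) := by
    refine monotoneOn_of_hasDerivWithinAt_nonneg (convex_Ico 0 δ)
      ((continuous_pow n).mul (hg.continuous_deriv (by norm_num))).continuousOn
      (f' := fun s => s ^ n * radialLaplacian n g s) (fun s hs => ?_) (fun s hs => ?_) <;>
      rw [interior_Ico] at hs
    · exact (hasDerivAt_pow_mul_deriv n hs.1.ne' (hg' s)).hasDerivWithinAt
    · exact mul_nonneg (pow_nonneg hs.1.le n) (h s hs)
  intro t ht
  have := hmono ⟨le_rfl, ht.1.trans ht.2⟩ (Ioo_subset_Ico_self ht) ht.1.le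
  simp only [hg0, mul_zero] at this
  exact nonneg_of_mul_nonneg_right this (pow_pos ht.1 n)

theorem monotoneOn_of_radialLaplacian_nonneg {g : ℝ → ℝ} (hg : ContDiff ℝ 2 g) (n : ℕ)
    {δ : ℝ} (hg0 : deriv g 0 = 0) (h : ∀ t ∈ Ioo 0 δ, 0 ≤ radialLaplacian n g t) :
    MonotoneOn g (Ico 0 δ) := by
  refine monotoneOn_of_deriv_nonneg (convex_Ico 0 δ) hg.continuous.continuousOn
    (hg.differentiable (by norm_num)).differentiableOn fun t ht => ?_
  rw [interior_Ico] at ht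
  exact deriv_nonneg_of_radialLaplacian_nonneg hg n hg0 h t ht

theorem deriv_deriv_comp_sqrt_sq_add_sq {g : ℝ → ℝ} (hg : Differentiable ℝ g) {t : ℝ}
    (ht : 0 < t) (hg' : DifferentiableAt ℝ (deriv g) t) :
    deriv (deriv fun s => g √(t ^ 2 + s ^ 2)) 0 = deriv g t / t := by
  set φ : ℝ → ℝ := fun s => √(t ^ 2 + s ^ 2)
  have hφ_pos : ∀ s, 0 < φ s := fun s => Real.sqrt_pos.2 (by positivity)
  have hφ0 : φ 0 = t := by simp [φ, Real.sqrt_sq ht.le]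
  have hφ : ∀ s, HasDerivAt φ (s / φ s) s := fun s => by
    refine (((hasDerivAt_pow 2 s).const_add (t ^ 2)).sqrt (by positivity)).congr_deriv ?_
    simp only [φ]
    field_simp
    norm_num
  have hdφ : deriv (fun s => g (φ s)) = fun s => deriv g (φ s) * (s / φ s) :=
    funext fun s => ((hg (φ s)).hasDerivAt.comp s (hφ s)).deriv
  have h0 : HasDerivAt (fun s => deriv g (φ s) * (s / φ s)) _ 0 :=
    ((hφ0 ▸ hg').hasDerivAt.comp 0 (hφ 0)).mul ((hasDerivAt_id 0).div (hφ 0) (hφ_pos 0).ne')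
  rw [hdφ, h0.deriv]
  simp only [hφ0, zero_div, mul_zero, Function.comp_apply, one_mul, sub_zero, zero_add]
  field_simp

section Radial

variable {N : ℕ}

theorem norm_smul_single_one (i : Fin N) (t : ℝ) :
    ‖t • EuclideanSpace.single i (1 : ℝ)‖ = |t| := by
  simp [norm_smul, PiLp.norm_single]

theorem norm_smul_single_add_smul_single {i j : Fin N} (hij : i ≠ j) (t s : ℝ) :
    ‖t • EuclideanSpace.single i (1 : ℝ) + s • EuclideanSpace.single j 1‖ = √(t ^ 2 + s ^ 2) := by
  rw [EuclideanSpace.norm_eq, Finset.sum_eq_add i j hij]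
  · simp [hij, hij.symm]
  · intro k _ hk
    simp [hk]
  all_goals simp

def IsRadial (f : EuclideanSpace ℝ (Fin N) → ℝ) : Prop :=
  ∀ x y : EuclideanSpace ℝ (Fin N), ‖x‖ = ‖y‖ → f x = f y

noncomputable def axisProfile (f : EuclideanSpace ℝ (Fin N) → ℝ) (i : Fin N) (t : ℝ) : ℝ :=
  f (t • EuclideanSpace.single i 1)

variable {f : EuclideanSpace ℝ (Fin N) → ℝ}

theorem axisProfile_eq_of_radial (hf : IsRadial f)
    (i j : Fin N) : axisProfile f i = axisProfile f j :=
  funext fun t => hf _ _ (by rw [norm_smul_single_one, norm_smul_single_one])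

theorem lap_zero_of_radial (hf : IsRadial f)
    (i : Fin N) : lap f 0 = N * deriv (deriv (axisProfile f i)) 0 := by
  have hterm : ∀ j : Fin N,
      (fun t : ℝ => f (0 + t • EuclideanSpace.single j 1)) = axisProfile f i :=
    fun j => by simp only [zero_add]; exact axisProfile_eq_of_radial hf j i
  rw [lap, Finset.sum_congr rfl fun j _ => by rw [hterm j]]
  simp [iteratedDeriv_eq_iterate]

theorem apply_eq_axisProfile_norm (hf : IsRadial f) (i : Fin N)
    (x : EuclideanSpace ℝ (Fin N)) : f x = axisProfile f i ‖x‖ :=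
  hf _ _ (by rw [norm_smul_single_one, abs_norm])

theorem deriv_axisProfile_zero (hf : IsRadial f)
    (i : Fin N) : deriv (axisProfile f i) 0 = 0 := by
  have heven : (fun t => axisProfile f i (-t)) = axisProfile f i :=
    funext fun t => hf _ _ (by rw [norm_smul_single_one, norm_smul_single_one, abs_neg])
  have h := deriv_comp_neg (f := axisProfile f i) (x := 0)
  rw [heven, neg_zero] at h
  linarith

theorem lap_smul_single_of_radial (hf : IsRadial f)
    {i : Fin N} (hg : ContDiff ℝ 2 (axisProfile f i)) {t : ℝ} (ht : 0 < t) :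
    lap f (t • EuclideanSpace.single i 1) = radialLaplacian (N - 1) (axisProfile f i) t := by
  set g := axisProfile f i
  have hdiag : (fun s : ℝ => f (t • EuclideanSpace.single i 1 + s • EuclideanSpace.single i 1))
      = fun s => g (t + s) := by
    simp only [← add_smul]; rfl
  have hoff : ∀ j ≠ i,
      (fun s : ℝ => f (t • EuclideanSpace.single i 1 + s • EuclideanSpace.single j 1))
        = fun s => g √(t ^ 2 + s ^ 2) := fun j hj => funext fun s => hf _ _ <| by
    rw [norm_smul_single_add_smul_single hj.symm, norm_smul_single_one,
      abs_of_nonneg (Real.sqrt_nonneg _)]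
  rw [lap, ← Finset.add_sum_erase _ _ (Finset.mem_univ i), hdiag, iteratedDeriv_comp_const_add,
    Finset.sum_congr rfl fun j hj => by rw [hoff j (Finset.ne_of_mem_erase hj)]]
  have hsqrt := deriv_deriv_comp_sqrt_sq_add_sq (hg.differentiable (by norm_num)) ht
    (hg.differentiable_deriv_two t)
  simp only [iteratedDeriv_eq_iterate, Function.iterate_succ_apply, Function.iterate_zero_apply,
    add_zero, hsqrt, Finset.sum_const, Finset.card_erase_of_mem (Finset.mem_univ i),
    Finset.card_univ, Fintype.card_fin, nsmul_eq_mul, radialLaplacian]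

theorem apply_zero_le_of_lap_nonneg (hf : IsRadial f)
    {i : Fin N} (hg : ContDiff ℝ 2 (axisProfile f i)) {δ : ℝ}
    (hsub : ∀ x : EuclideanSpace ℝ (Fin N), ‖x‖ < δ → 0 ≤ lap f x)
    {x : EuclideanSpace ℝ (Fin N)} (hx : ‖x‖ < δ) : f 0 ≤ f x := by
  have hmono : MonotoneOn (axisProfile f i) (Ico 0 δ) :=
    monotoneOn_of_radialLaplacian_nonneg hg (N - 1) (deriv_axisProfile_zero hf i)
      fun t ⟨ht, htδ⟩ => lap_smul_single_of_radial hf hg ht ▸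
        hsub _ (by rwa [norm_smul_single_one, abs_of_pos ht])
  have h := hmono ⟨le_rfl, (norm_nonneg x).trans_lt hx⟩ ⟨norm_nonneg x, hx⟩ (norm_nonneg x)
  rwa [apply_eq_axisProfile_norm hf i x, apply_eq_axisProfile_norm hf i 0, norm_zero]

end Radial

theorem lap_nonneg_of_lap_zero_nonneg {N : ℕ} {V Υ : EuclideanSpace ℝ (Fin N) → ℝ} {μ : ℝ}
    (hμ : 0 ≤ μ) (heq : ∀ x, -lap Υ x + V x * Υ x = μ * Υ x ^ 3) (hpos : 0 < Υ 0)
    (h0 : 0 ≤ lap Υ 0) {x : EuclideanSpace ℝ (Fin N)} (hxpos : 0 ≤ Υ x) (hΥx : Υ x ≤ Υ 0)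
    (hVx : V 0 ≤ V x) : 0 ≤ lap Υ x := by
  have hfactor : ∀ y, lap Υ y = Υ y * (V y - μ * Υ y ^ 2) := fun y => by linear_combination -heq y
  have hV0 : μ * Υ 0 ^ 2 ≤ V 0 := by
    rw [hfactor] at h0
    linarith [nonneg_of_mul_nonneg_right h0 hpos]
  have hsq : μ * Υ x ^ 2 ≤ μ * Υ 0 ^ 2 := by gcongr
  rw [hfactor]
  exact mul_nonneg hxpos (by linarith)

theorem stmt2_general {N : ℕ} (hN : 0 < N) (V Υ : EuclideanSpace ℝ (Fin N) → ℝ) (μ₁ : ℝ)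
    (hμ₁ : 0 < μ₁)
    (hVmono : ∃ r₀ > (0 : ℝ), ∀ x y : EuclideanSpace ℝ (Fin N),
      ‖x‖ ≤ ‖y‖ → ‖y‖ ≤ r₀ → V x ≤ V y)
    (hΥ : ContDiff ℝ 3 Υ) (hΥpos : ∀ x, 0 < Υ x)
    (hΥrad : ∀ x y : EuclideanSpace ℝ (Fin N), ‖x‖ = ‖y‖ → Υ x = Υ y)
    (heq : ∀ x, -lap Υ x + V x * Υ x = μ₁ * (Υ x) ^ 3)
    (hmax : ∃ r > (0 : ℝ), ∀ x : EuclideanSpace ℝ (Fin N), x ≠ 0 → ‖x‖ < r → Υ x < Υ 0) :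
    (∀ i : Fin N,
      iteratedDeriv 2 (fun t : ℝ => Υ (t • EuclideanSpace.single i 1)) 0 < 0) ∧
    lap Υ 0 ≠ 0 := by
  obtain ⟨r₀, hr₀, hVmono⟩ := hVmono
  obtain ⟨r, hr, hmax⟩ := hmax
  set i₀ : Fin N := ⟨0, hN⟩
  set g := axisProfile Υ i₀
  have hg : ContDiff ℝ 2 g := (hΥ.of_le (by norm_num)).comp (contDiff_id.smul contDiff_const)
  have hlap0 := lap_zero_of_radial hΥrad i₀
  have hneg : deriv (deriv g) 0 < 0 := by
    by_contra! h
    set δ := min r r₀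
    have hsub : ∀ x : EuclideanSpace ℝ (Fin N), ‖x‖ < δ → 0 ≤ lap Υ x := fun x hx => by
      obtain ⟨hxr, hxr₀⟩ := lt_min_iff.1 hx
      have hΥx : Υ x ≤ Υ 0 := by
        rcases eq_or_ne x 0 with rfl | hx0
        exacts [le_rfl, (hmax x hx0 hxr).le]
      exact lap_nonneg_of_lap_zero_nonneg hμ₁.le heq (hΥpos 0) (by rw [hlap0]; positivity)
        (hΥpos x).le hΥx (hVmono 0 x (by simp) hxr₀.le)
    set x := (δ / 2) • EuclideanSpace.single i₀ (1 : ℝ)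
    have hδ : 0 < δ := lt_min hr hr₀
    have hx : ‖x‖ = δ / 2 := by rw [norm_smul_single_one, abs_of_pos (by positivity)]
    have hlt := hmax x (smul_ne_zero (by positivity) (by simp)) (by linarith [min_le_left r r₀])
    linarith [apply_zero_le_of_lap_nonneg hΥrad hg hsub (x := x) (by linarith)]
  refine ⟨fun i => ?_, ?_⟩
  · change iteratedDeriv 2 (axisProfile Υ i) 0 < 0
    rwa [axisProfile_eq_of_radial hΥrad i i₀, iteratedDeriv_eq_iterate]
  · rw [hlap0]
    exact (mul_neg_of_pos_of_neg (by exact_mod_cast hN) hneg).ne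

/-- Hopf lemma argument, Remark 1.2: if `V` is continuous, radial and radially
non-decreasing near `0`, and `Υ ∈ C³` is a positive radial solution of `−ΔΥ + VΥ = μ₁Υ³`
with a strict local maximum at the origin, then `∂²_{ii}Υ(0) < 0` for every `i`;
in particular `ΔΥ(0) ≠ 0`. -/
theorem stmt2 {N : ℕ} (hN : 0 < N) (V Υ : EuclideanSpace ℝ (Fin N) → ℝ) (μ₁ : ℝ)
    (hμ₁ : 0 < μ₁)
    (hVc : Continuous V)
    (hVrad : ∀ x y : EuclideanSpace ℝ (Fin N), ‖x‖ = ‖y‖ → V x = V y)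
    (hVmono : ∃ r₀ > (0 : ℝ), ∀ x y : EuclideanSpace ℝ (Fin N),
      ‖x‖ ≤ ‖y‖ → ‖y‖ ≤ r₀ → V x ≤ V y)
    (hΥ : ContDiff ℝ 3 Υ) (hΥpos : ∀ x, 0 < Υ x)
    (hΥrad : ∀ x y : EuclideanSpace ℝ (Fin N), ‖x‖ = ‖y‖ → Υ x = Υ y)
    (heq : ∀ x, -lap Υ x + V x * Υ x = μ₁ * (Υ x) ^ 3)
    (hmax : ∃ r > (0 : ℝ), ∀ x : EuclideanSpace ℝ (Fin N), x ≠ 0 → ‖x‖ < r → Υ x < Υ 0) :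
    (∀ i : Fin N,
      iteratedDeriv 2 (fun t : ℝ => Υ (t • EuclideanSpace.single i 1)) 0 < 0) ∧
    lap Υ 0 ≠ 0 :=
  stmt2_general hN V Υ μ₁ hμ₁ hVmono hΥ hΥpos hΥrad heq hmax
end

section
/- Let u, v : ℝ^N → ℝ be positive continuous radial functions with u(x) ~ |x|^a e^{−b|x|} and v(x) ~ |x|^{a'} e^{−b'|x|} as |x| → ∞, where b, b' > 0 and b < b'. Then as |ξ| → ∞, ∫_{ℝ^N} u(x − ξ) v(x) dx ~ C e^{−b|ξ|} |ξ|^a for some constant C > 0. -/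
/-!
Along a ray `ξ = t • e` with `‖e‖ = 1` one has `‖x - t • e‖ - t → -⟪x, e⟫`, hence
`u (x - t • e) / (e^{-b t} t^a) → cu e^{b ⟪x, e⟫}` pointwise. Peetre's inequality bounds
`u (x - t • e)` by a multiple of `e^{-b t} t^a (1 + ‖x‖)^{|a|} e^{b ‖x‖}`, so the integrands
are dominated by a multiple of `(1 + ‖x‖)^{|a| + a'} e^{-(b' - b) ‖x‖}`, which is integrable
because `b < b'`. Dominated convergence gives the limit `C = cu ∫ e^{b ⟪x, e⟫} v x dx > 0`.
As `u` and `v` are radial, a reflection taking `ξ` to `‖ξ‖ • e` shows that the integral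
depends on `‖ξ‖` only.
-/

open MeasureTheory Filter Topology

section Weight

variable {E : Type*} [NormedAddCommGroup E]

noncomputable def expWeight (a b : ℝ) (x : E) : ℝ := (1 + ‖x‖) ^ a * Real.exp (-b * ‖x‖)

lemma expWeight_pos (a b : ℝ) (x : E) : 0 < expWeight a b x := by
  unfold expWeight
  positivity

lemma continuous_expWeight (a b : ℝ) : Continuous (expWeight (E := E) a b) :=
  ((continuous_const.add continuous_norm).rpow_const fun x =>
    Or.inl (by positivity : (0 : ℝ) < 1 + ‖x‖).ne').mul (by fun_prop)

lemma expWeight_mul_expWeight (a a' b b' : ℝ) (x : E) :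
    expWeight a b x * expWeight a' b' x = expWeight (a + a') (b + b') x := by
  unfold expWeight
  rw [Real.rpow_add (by positivity), neg_add, add_mul, Real.exp_add]
  ring

/-- Peetre's inequality. -/
lemma one_add_norm_sub_rpow_le (x y : E) (a : ℝ) :
    (1 + ‖x - y‖) ^ a ≤ (1 + ‖y‖) ^ a * (1 + ‖x‖) ^ |a| := by
  rcases le_or_gt 0 a with ha | ha
  · rw [abs_of_nonneg ha, ← Real.mul_rpow (by positivity) (by positivity)]
    refine Real.rpow_le_rpow (by positivity) ?_ ha
    nlinarith [norm_sub_le x y, norm_nonneg x, norm_nonneg y]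
  · rw [abs_of_neg ha, Real.rpow_neg (by positivity), ← div_eq_mul_inv,
      ← Real.div_rpow (by positivity) (by positivity)]
    refine Real.rpow_le_rpow_of_nonpos (by positivity) ?_ ha.le
    rw [div_le_iff₀ (by positivity)]
    nlinarith [norm_sub_rev x y ▸ norm_sub_norm_le y x, norm_nonneg x,
      norm_nonneg (x - y)]

lemma expWeight_sub_le {b : ℝ} (hb : 0 ≤ b) (a : ℝ) (x y : E) :
    expWeight a b (x - y) ≤ expWeight a b y * expWeight |a| (-b) x := by
  have hexp : Real.exp (-b * ‖x - y‖) ≤ Real.exp (-b * ‖y‖) * Real.exp (- -b * ‖x‖) := by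
    rw [← Real.exp_add, Real.exp_le_exp]
    nlinarith [mul_le_mul_of_nonneg_left (norm_sub_rev x y ▸ norm_sub_norm_le y x) hb]
  calc expWeight a b (x - y)
      ≤ ((1 + ‖y‖) ^ a * (1 + ‖x‖) ^ |a|)
          * (Real.exp (-b * ‖y‖) * Real.exp (- -b * ‖x‖)) :=
        mul_le_mul (one_add_norm_sub_rpow_le x y a) hexp (by positivity) (by positivity)
    _ = expWeight a b y * expWeight |a| (-b) x := by unfold expWeight; ring

lemma Continuous.exists_pos_abs_le_of_tendsto_cocompact {X : Type*} [TopologicalSpace X]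
    {f : X → ℝ} (hf : Continuous f) {c : ℝ} (h : Tendsto f (cocompact X) (𝓝 c)) :
    ∃ C > 0, ∀ x, |f x| ≤ C := by
  obtain ⟨C, hC, hbound⟩ :=
    (hf.isBounded_range_iff_isBigO.2 (h.isBigO_one ℝ)).exists_pos_norm_le
  exact ⟨C, hC, fun x => hbound _ ⟨x, rfl⟩⟩

lemma tendsto_expWeight_cocompact [ProperSpace E] (p : ℝ) {c : ℝ} (hc : 0 < c) :
    Tendsto (expWeight (E := E) p c) (cocompact E) (𝓝 0) := by
  have hshift := ((tendsto_rpow_mul_exp_neg_mul_atTop_nhds_zero p c hc).comp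
    (tendsto_atTop_add_const_left atTop 1 tendsto_id)).const_mul (Real.exp c)
  rw [mul_zero] at hshift
  refine (hshift.comp tendsto_norm_cocompact_atTop).congr fun x => ?_
  simp only [Function.comp_apply, id, expWeight]
  rw [mul_left_comm, ← Real.exp_add]
  ring_nf

lemma exists_abs_le_mul_expWeight [ProperSpace E] {w : E → ℝ} {a b c : ℝ} (hw : Continuous w)
    (h : Tendsto (fun x => w x / (‖x‖ ^ a * Real.exp (-b * ‖x‖))) (cocompact E) (𝓝 c)) :
    ∃ K > 0, ∀ x, |w x| ≤ K * expWeight a b x := by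
  have hcorr : Tendsto (fun x : E => (1 + ‖x‖⁻¹) ^ (-a)) (cocompact E) (𝓝 1) := by
    simpa using ((tendsto_inv_atTop_zero.comp tendsto_norm_cocompact_atTop).const_add
      1).rpow_const (p := -a) (Or.inl (by norm_num))
  have hratio : Tendsto (fun x => w x / expWeight a b x) (cocompact E) (𝓝 c) := by
    refine (mul_one c ▸ h.mul hcorr).congr' ?_
    filter_upwards [tendsto_norm_cocompact_atTop.eventually_gt_atTop 0] with x hx
    rw [show 1 + ‖x‖⁻¹ = (1 + ‖x‖) / ‖x‖ by field_simp; ring, Real.rpow_neg (by positivity),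
      Real.div_rpow (by positivity) hx.le, expWeight]
    field_simp
  obtain ⟨K, hK, hbound⟩ := (hw.div (continuous_expWeight a b)
    fun x => (expWeight_pos a b x).ne').exists_pos_abs_le_of_tendsto_cocompact hratio
  refine ⟨K, hK, fun x => ?_⟩
  have := hbound x
  rwa [Pi.div_apply, abs_div, abs_of_pos (expWeight_pos a b x),
    div_le_iff₀ (expWeight_pos a b x)] at this

lemma integrable_expWeight [NormedSpace ℝ E] [FiniteDimensional ℝ E] [MeasurableSpace E]
    [BorelSpace E] (μ : Measure E) [μ.IsAddHaarMeasure] (p : ℝ) {c : ℝ} (hc : 0 < c) :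
    Integrable (expWeight p c) μ := by
  set r : ℝ := Module.finrank ℝ E + 1
  obtain ⟨C, -, hC⟩ := (continuous_expWeight (E := E) (p + r) c)
    |>.exists_pos_abs_le_of_tendsto_cocompact (tendsto_expWeight_cocompact (p + r) hc)
  refine ((integrable_one_add_norm (μ := μ) (r := r) (by simp [r])).const_mul C).mono'
    (continuous_expWeight p c).aestronglyMeasurable (Eventually.of_forall fun x => ?_)
  have hsplit : expWeight p c x = expWeight (p + r) c x * (1 + ‖x‖) ^ (-r) := by
    unfold expWeight
    rw [Real.rpow_add (by positivity), Real.rpow_neg (by positivity)]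
    field_simp
  rw [Real.norm_eq_abs, abs_of_pos (expWeight_pos p c x), hsplit]
  exact mul_le_mul_of_nonneg_right ((le_abs_self _).trans (hC x)) (by positivity)

end Weight

lemma integral_pos_of_forall_pos {α : Type*} [MeasurableSpace α] {μ : Measure α} [NeZero μ]
    {f : α → ℝ} (hf : Integrable f μ) (hpos : ∀ x, 0 < f x) : 0 < ∫ x, f x ∂μ := by
  rw [integral_pos_iff_support_of_nonneg (fun x => (hpos x).le) hf]
  simp [Function.support, (hpos _).ne', NeZero.ne μ]

section Ray

variable {F : Type*} [NormedAddCommGroup F] [InnerProductSpace ℝ F] {e : F}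

lemma abs_norm_sub_smul_sub_le (he : ‖e‖ = 1) (x : F) {t : ℝ} (ht : 0 ≤ t) :
    |‖x - t • e‖ - t| ≤ ‖x‖ := by
  simpa [norm_smul, he, abs_of_nonneg ht] using abs_norm_sub_norm_le (x - t • e) (-(t • e))

lemma tendsto_norm_sub_smul_sub_self (he : ‖e‖ = 1) (x : F) :
    Tendsto (fun t : ℝ => ‖x - t • e‖ - t) atTop (𝓝 (-inner ℝ x e)) := by
  have hsmall : Tendsto (fun t : ℝ => (‖x - t • e‖ - t) / t) atTop (𝓝 0) := by
    refine squeeze_zero_norm' ?_ ((tendsto_const_nhds (x := ‖x‖)).div_atTop tendsto_id)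
    filter_upwards [eventually_gt_atTop 0] with t ht
    rw [norm_div, Real.norm_eq_abs, Real.norm_eq_abs, abs_of_pos ht]
    exact div_le_div_of_nonneg_right (abs_norm_sub_smul_sub_le he x ht.le) ht.le
  have hlim := ((tendsto_const_nhds (x := ‖x‖ ^ 2)).div_atTop tendsto_id |>.sub_const
    (2 * inner ℝ x e)).div (hsmall.const_add 2) (by norm_num)
  rw [show (0 - 2 * inner ℝ x e) / (2 + 0) = -inner ℝ x e by ring] at hlim
  refine hlim.congr' ?_
  filter_upwards [eventually_gt_atTop 0] with t ht
  -- difference of squares: `(‖x - t • e‖ - t) * (‖x - t • e‖ + t) = ‖x‖ ^ 2 - 2 t ⟪x, e⟫`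
  have hsq : ‖x - t • e‖ ^ 2 = ‖x‖ ^ 2 - 2 * (t * inner ℝ x e) + t ^ 2 := by
    rw [norm_sub_sq_real, inner_smul_right, norm_smul, he, Real.norm_eq_abs, abs_of_pos ht]
    ring
  have hden : 2 + (‖x - t • e‖ - t) / t = (‖x - t • e‖ + t) / t := by field_simp; ring
  simp only [Pi.div_apply, id]
  rw [div_eq_iff (by rw [hden]; positivity)]
  field_simp
  linear_combination -hsq

lemma tendsto_comp_sub_smul_div [ProperSpace F] {w : F → ℝ} {a b c : ℝ}
    (h : Tendsto (fun y => w y / (‖y‖ ^ a * Real.exp (-b * ‖y‖))) (cocompact F) (𝓝 c))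
    (he : ‖e‖ = 1) (x : F) :
    Tendsto (fun t : ℝ => w (x - t • e) / (Real.exp (-b * t) * t ^ a)) atTop
      (𝓝 (c * Real.exp (b * inner ℝ x e))) := by
  have hd := tendsto_norm_sub_smul_sub_self he x
  have hnorm : Tendsto (fun t : ℝ => ‖x - t • e‖) atTop atTop :=
    (tendsto_id.atTop_add hd).congr fun t => by simp
  have hcocompact : Tendsto (fun t : ℝ => x - t • e) atTop (cocompact F) := by
    rw [← Metric.cobounded_eq_cocompact]
    exact tendsto_norm_atTop_iff_cobounded.mp hnorm
  have hpow : Tendsto (fun t : ℝ => (1 + (‖x - t • e‖ - t) / t) ^ a) atTop (𝓝 1) := by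
    simpa using ((hd.div_atTop tendsto_id).const_add 1).rpow_const (p := a)
      (Or.inl (by norm_num))
  have hexp : Tendsto (fun t : ℝ => Real.exp (-b * (‖x - t • e‖ - t))) atTop
      (𝓝 (Real.exp (b * inner ℝ x e))) := by
    simpa using (hd.const_mul (-b)).rexp
  have hlim := ((h.comp hcocompact).mul hpow).mul hexp
  rw [mul_one] at hlim
  refine hlim.congr' ?_
  filter_upwards [eventually_gt_atTop 0, hnorm.eventually_gt_atTop 0] with t ht hn
  rw [show 1 + (‖x - t • e‖ - t) / t = ‖x - t • e‖ / t by field_simp; ring,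
    Real.div_rpow hn.le ht.le, show -b * (‖x - t • e‖ - t) = -b * ‖x - t • e‖ - -b * t by ring,
    Real.exp_sub]
  simp only [Function.comp_apply]
  field_simp

lemma one_add_rpow_le_two_rpow_abs_mul_rpow {t : ℝ} (ht : 1 ≤ t) (a : ℝ) :
    (1 + t) ^ a ≤ 2 ^ |a| * t ^ a := by
  have ht0 : 0 < t := by linarith
  have hq : 1 ≤ (1 + t) / t := by rw [le_div_iff₀ ht0]; linarith
  calc (1 + t) ^ a = ((1 + t) / t) ^ a * t ^ a := by
        rw [Real.div_rpow (by linarith) ht0.le, div_mul_cancel₀ _ (by positivity)]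
    _ ≤ ((1 + t) / t) ^ |a| * t ^ a := by
        gcongr
        exact le_abs_self a
    _ ≤ 2 ^ |a| * t ^ a := by
        gcongr
        rw [div_le_iff₀ ht0]
        linarith

lemma expWeight_sub_smul_le {b : ℝ} (hb : 0 ≤ b) (he : ‖e‖ = 1) {t : ℝ} (ht : 1 ≤ t)
    (a : ℝ) (x : F) :
    expWeight a b (x - t • e)
      ≤ 2 ^ |a| * (Real.exp (-b * t) * t ^ a) * expWeight |a| (-b) x := by
  refine (expWeight_sub_le hb a x (t • e)).trans
    (mul_le_mul_of_nonneg_right ?_ (expWeight_pos _ _ _).le)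
  rw [expWeight, norm_smul, he, Real.norm_eq_abs, abs_of_nonneg (by linarith), mul_one]
  calc (1 + t) ^ a * Real.exp (-b * t) ≤ (2 ^ |a| * t ^ a) * Real.exp (-b * t) := by
        gcongr
        exact one_add_rpow_le_two_rpow_abs_mul_rpow ht a
    _ = 2 ^ |a| * (Real.exp (-b * t) * t ^ a) := by ring

lemma abs_comp_sub_smul_mul_div_le {u v : F → ℝ} {a a' b b' Ku Kv : ℝ} (hb : 0 ≤ b)
    (hKu : 0 ≤ Ku) (hu : ∀ x, |u x| ≤ Ku * expWeight a b x)
    (hv : ∀ x, |v x| ≤ Kv * expWeight a' b' x) (he : ‖e‖ = 1) {t : ℝ} (ht : 1 ≤ t) (x : F) :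
    |u (x - t • e) * v x / (Real.exp (-b * t) * t ^ a)|
      ≤ 2 ^ |a| * Ku * Kv * expWeight (|a| + a') (-b + b') x := by
  have hD : 0 < Real.exp (-b * t) * t ^ a := by
    have : 0 < t := by linarith
    positivity
  rw [abs_div, abs_mul, abs_of_pos hD, div_le_iff₀ hD]
  calc |u (x - t • e)| * |v x|
      ≤ (Ku * (2 ^ |a| * (Real.exp (-b * t) * t ^ a) * expWeight |a| (-b) x))
        * (Kv * expWeight a' b' x) :=
        mul_le_mul ((hu _).trans (mul_le_mul_of_nonneg_left
          (expWeight_sub_smul_le hb he ht a x) hKu)) (hv x) (abs_nonneg _)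
          (by have := expWeight_pos |a| (-b) x; positivity)
    _ = 2 ^ |a| * Ku * Kv * expWeight (|a| + a') (-b + b') x * (Real.exp (-b * t) * t ^ a) := by
        rw [← expWeight_mul_expWeight]
        ring

variable [FiniteDimensional ℝ F] [MeasurableSpace F] [BorelSpace F]

theorem exists_pos_tendsto_integral_comp_sub_smul_mul_div (μ : Measure F) [μ.IsAddHaarMeasure]
    {u v : F → ℝ} {a a' b b' cu cv : ℝ} (hb : 0 ≤ b) (hbb' : b < b')
    (hu : Continuous u) (hv : Continuous v) (hvpos : ∀ x, 0 < v x) (hcu : 0 < cu)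
    (hua : Tendsto (fun x => u x / (‖x‖ ^ a * Real.exp (-b * ‖x‖))) (cocompact F) (𝓝 cu))
    (hva : Tendsto (fun x => v x / (‖x‖ ^ a' * Real.exp (-b' * ‖x‖))) (cocompact F) (𝓝 cv))
    (he : ‖e‖ = 1) :
    ∃ C > 0, Tendsto
      (fun t : ℝ => (∫ x, u (x - t • e) * v x ∂μ) / (Real.exp (-b * t) * t ^ a)) atTop (𝓝 C) := by
  obtain ⟨Ku, hKu, hKu'⟩ := exists_abs_le_mul_expWeight hu hua
  obtain ⟨Kv, -, hKv'⟩ := exists_abs_le_mul_expWeight hv hva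
  set f : ℝ → F → ℝ := fun t x => u (x - t • e) * v x / (Real.exp (-b * t) * t ^ a)
  set g : F → ℝ := fun x => 2 ^ |a| * Ku * Kv * expWeight (|a| + a') (-b + b') x
  set h : F → ℝ := fun x => cu * Real.exp (b * inner ℝ x e) * v x
  have hg : Integrable g μ := (integrable_expWeight μ _ (by linarith)).const_mul _
  have hfg : ∀ t ≥ 1, ∀ x, |f t x| ≤ g x := fun t ht x =>
    abs_comp_sub_smul_mul_div_le hb hKu.le hKu' hKv' he ht x
  have hfh : ∀ x, Tendsto (fun t => f t x) atTop (𝓝 (h x)) := fun x =>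
    ((tendsto_comp_sub_smul_div hua he x).mul_const (v x)).congr fun t => by simp only [f]; ring
  have hh : Integrable h μ := hg.mono' (by fun_prop : Continuous h).aestronglyMeasurable
    (Eventually.of_forall fun x => le_of_tendsto (hfh x).abs
      ((eventually_ge_atTop 1).mono fun t ht => hfg t ht x))
  refine ⟨∫ x, h x ∂μ, integral_pos_of_forall_pos hh fun x => by
    have := hvpos x; positivity, ?_⟩
  simp_rw [← integral_div]
  exact tendsto_integral_filter_of_dominated_convergence g
    (Eventually.of_forall fun t => (by fun_prop : Continuous (f t)).aestronglyMeasurable)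
    ((eventually_ge_atTop 1).mono fun t ht => Eventually.of_forall (hfg t ht)) hg
    (Eventually.of_forall hfh)

end Ray

lemma integral_comp_sub_mul_eq_of_norm_eq {F : Type*} [NormedAddCommGroup F]
    [InnerProductSpace ℝ F] [FiniteDimensional ℝ F] [MeasurableSpace F] [BorelSpace F]
    {u v : F → ℝ} (hu : ∀ x y : F, ‖x‖ = ‖y‖ → u x = u y)
    (hv : ∀ x y : F, ‖x‖ = ‖y‖ → v x = v y)
    {ξ η : F} (h : ‖ξ‖ = ‖η‖) :
    ∫ x, u (x - ξ) * v x = ∫ x, u (x - η) * v x := by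
  set R := Submodule.reflection (ℝ ∙ (η - ξ))ᗮ
  have hR : R η = ξ := Submodule.reflection_sub h.symm
  rw [← integral_comp R (fun y => u (y - ξ) * v y)]
  congr 1 with x
  rw [← hR, ← map_sub, hu _ _ (R.norm_map _), hv _ _ (R.norm_map _)]

theorem stmt5_general {N : ℕ} (u v : EuclideanSpace ℝ (Fin N) → ℝ) (a a' b b' : ℝ)
    (hb : 0 < b) (hbb' : b < b')
    (hu : Continuous u) (hv : Continuous v)
    (hvpos : ∀ x, 0 < v x)
    (hurad : ∀ x y : EuclideanSpace ℝ (Fin N), ‖x‖ = ‖y‖ → u x = u y)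
    (hvrad : ∀ x y : EuclideanSpace ℝ (Fin N), ‖x‖ = ‖y‖ → v x = v y)
    (cu cv : ℝ) (hcu : 0 < cu)
    (hua : Tendsto (fun x : EuclideanSpace ℝ (Fin N) =>
        u x / (‖x‖ ^ a * Real.exp (-b * ‖x‖)))
      (cocompact (EuclideanSpace ℝ (Fin N))) (𝓝 cu))
    (hva : Tendsto (fun x : EuclideanSpace ℝ (Fin N) =>
        v x / (‖x‖ ^ a' * Real.exp (-b' * ‖x‖)))
      (cocompact (EuclideanSpace ℝ (Fin N))) (𝓝 cv)) :
    ∃ C > (0 : ℝ), Tendsto (fun ξ : EuclideanSpace ℝ (Fin N) =>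
        (∫ x, u (x - ξ) * v x) / (Real.exp (-b * ‖ξ‖) * ‖ξ‖ ^ a))
      (cocompact (EuclideanSpace ℝ (Fin N))) (𝓝 C) := by
  rcases subsingleton_or_nontrivial (EuclideanSpace ℝ (Fin N)) with hE | hE
  · exact ⟨1, one_pos, by rw [cocompact_eq_bot]; exact tendsto_bot⟩
  obtain ⟨e, he⟩ := exists_norm_eq (EuclideanSpace ℝ (Fin N)) zero_le_one
  obtain ⟨C, hC, hray⟩ := exists_pos_tendsto_integral_comp_sub_smul_mul_div volume hb.le hbb'
    hu hv hvpos hcu hua hva he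
  refine ⟨C, hC, (hray.comp tendsto_norm_cocompact_atTop).congr fun ξ => ?_⟩
  rw [Function.comp_apply, integral_comp_sub_mul_eq_of_norm_eq hurad hvrad (ξ := ξ)
    (η := ‖ξ‖ • e) (by simp [norm_smul, he])]

/-- interaction integral, case `b < b'`: for positive continuous radial `u, v`
with `u(x) ~ |x|^a e^{−b|x|}`, `v(x) ~ |x|^{a'} e^{−b'|x|}` and `0 < b < b'`,
`∫ u(x−ξ) v(x) dx ~ C e^{−b|ξ|}|ξ|^a` as `|ξ| → ∞`. -/
theorem stmt5 {N : ℕ} (u v : EuclideanSpace ℝ (Fin N) → ℝ) (a a' b b' : ℝ)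
    (hb : 0 < b) (hbb' : b < b')
    (hu : Continuous u) (hv : Continuous v)
    (hupos : ∀ x, 0 < u x) (hvpos : ∀ x, 0 < v x)
    (hurad : ∀ x y : EuclideanSpace ℝ (Fin N), ‖x‖ = ‖y‖ → u x = u y)
    (hvrad : ∀ x y : EuclideanSpace ℝ (Fin N), ‖x‖ = ‖y‖ → v x = v y)
    (cu cv : ℝ) (hcu : 0 < cu) (hcv : 0 < cv)
    (hua : Tendsto (fun x : EuclideanSpace ℝ (Fin N) =>
        u x / (‖x‖ ^ a * Real.exp (-b * ‖x‖)))
      (cocompact (EuclideanSpace ℝ (Fin N))) (𝓝 cu))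
    (hva : Tendsto (fun x : EuclideanSpace ℝ (Fin N) =>
        v x / (‖x‖ ^ a' * Real.exp (-b' * ‖x‖)))
      (cocompact (EuclideanSpace ℝ (Fin N))) (𝓝 cv)) :
    ∃ C > (0 : ℝ), Tendsto (fun ξ : EuclideanSpace ℝ (Fin N) =>
        (∫ x, u (x - ξ) * v x) / (Real.exp (-b * ‖ξ‖) * ‖ξ‖ ^ a))
      (cocompact (EuclideanSpace ℝ (Fin N))) (𝓝 C) :=
  stmt5_general u v a a' b b' hb hbb' hu hv hvpos hurad hvrad cu cv hcu hua hva
end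

section
/- Let U be the positive radial solution of −ΔU + ω₀U = μ₂U³ with the standard decay U(x) ~ C₀ e^{−√ω₀|x|}|x|^{−(N−1)/2}. Set U_{±P}(x) = U(x ∓ P/ε) with P = ρ (1,0,…,0). Then ‖U_{P}² U_{−P}‖_{L²(ℝ^N)} ≤ C e^{−2√ω₀ ρ/ε} (ρ/ε)^{−(N−1)/2} for ρ/ε large. -/
/-!
Continuity together with the asymptotics of `U` gives the global bound
`|U y| ≤ M e^{-√ω₀ |y|} (1 + |y|)^{-(N-1)/2}`. The two bumps sit at distance `2ρ/ε`, so
`|x - P/ε| + |x + P/ε| ≥ 2ρ/ε` for every `x`; the product of the three exponentials is then at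
most `e^{-2√ω₀ ρ/ε} e^{-√ω₀ |x - P/ε|}`, and the product of the polynomial factors at most
`(ρ/ε)^{-(N-1)/2}`. What is left is the `L²` norm of a translate of `e^{-√ω₀ |x|}`, a
constant.
-/

open MeasureTheory Filter Topology

open Asymptotics Real

section ExpDecay

variable {E : Type*} [NormedAddCommGroup E] [NormedSpace ℝ E] [FiniteDimensional ℝ E]
  [MeasurableSpace E] [BorelSpace E] (μ : Measure E) [μ.IsAddHaarMeasure]

theorem integrable_exp_neg_mul_norm {b : ℝ} (hb : 0 < b) :
    Integrable (fun x : E => exp (-b * ‖x‖)) μ := by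
  rcases subsingleton_or_nontrivial E with hE | hE
  · exact (by fun_prop : Continuous fun x : E => exp (-b * ‖x‖)).integrable_of_hasCompactSupport
      (.of_compactSpace _)
  rw [integrable_fun_norm_addHaar μ (f := fun t => exp (-b * t))]
  refine (integrableOn_rpow_mul_exp_neg_mul_rpow (s := (Module.finrank ℝ E - 1 : ℕ)) (p := 1)
    (neg_one_lt_zero.trans_le (Nat.cast_nonneg _)) one_pos hb).congr_fun (fun t _ => ?_)
    measurableSet_Ioi
  simp [rpow_natCast]

theorem memLp_two_exp_neg_mul_norm {b : ℝ} (hb : 0 < b) :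
    MemLp (fun x : E => exp (-b * ‖x‖)) 2 μ := by
  refine (memLp_two_iff_integrable_sq (by fun_prop)).2 ?_
  refine (integrable_exp_neg_mul_norm μ (mul_pos two_pos hb)).congr (.of_forall fun x => ?_)
  simp only [← exp_nat_mul]
  ring_nf

end ExpDecay

theorem Continuous.exists_norm_le_mul_of_isBigO_cocompact {X F : Type*} [TopologicalSpace X]
    [SeminormedAddCommGroup F] {f : X → F} {g : X → ℝ} (hf : Continuous f) (hg : Continuous g)
    (hg0 : ∀ x, 0 < g x) (h : f =O[cocompact X] g) : ∃ M > 0, ∀ x, ‖f x‖ ≤ M * g x := by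
  have hcont : Continuous fun x => ‖f x‖ / g x := hf.norm.div hg fun x => (hg0 x).ne'
  have hbigO : (fun x => ‖f x‖ / g x) =O[cocompact X] (1 : X → ℝ) := by
    obtain ⟨c, hc⟩ := h.bound
    refine IsBigO.of_bound c (hc.mono fun x hx => ?_)
    rw [norm_of_nonneg (div_nonneg (norm_nonneg _) (hg0 x).le), div_le_iff₀ (hg0 x)]
    simpa [norm_of_nonneg (hg0 x).le] using hx
  obtain ⟨M, hM0, hM⟩ := (hcont.isBounded_range_iff_isBigO.2 hbigO).exists_pos_norm_le
  exact ⟨M, hM0, fun x =>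
    (div_le_iff₀ (hg0 x)).1 ((le_norm_self _).trans (hM _ ⟨x, rfl⟩))⟩

theorem rpow_neg_le_two_rpow_mul_one_add_rpow_neg {t s : ℝ} (ht : 1 ≤ t) (hs : 0 ≤ s) :
    t ^ (-s) ≤ 2 ^ s * (1 + t) ^ (-s) := by
  calc t ^ (-s) ≤ ((1 + t) / 2) ^ (-s) :=
        rpow_le_rpow_of_nonpos (by positivity) (by linarith) (neg_nonpos.2 hs)
    _ = 2 ^ s * (1 + t) ^ (-s) := by
        rw [div_rpow (by positivity) zero_le_two, rpow_neg zero_le_two, div_inv_eq_mul, mul_comm]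

/-- `(1 + t)^{-s}` rather than `t^{-s}`, so that the weight stays bounded near `t = 0`. -/
noncomputable def decayWeight (b s t : ℝ) : ℝ := exp (-b * t) * (1 + t) ^ (-s)

theorem decayWeight_pos (b s : ℝ) {t : ℝ} (ht : 0 ≤ t) : 0 < decayWeight b s t := by
  unfold decayWeight
  positivity

theorem continuous_decayWeight_norm {E : Type*} [SeminormedAddCommGroup E] (b s : ℝ) :
    Continuous fun x : E => decayWeight b s ‖x‖ :=
  (by fun_prop : Continuous fun x : E => exp (-b * ‖x‖)).mul
    ((by fun_prop : Continuous fun x : E => 1 + ‖x‖).rpow_const fun _ => Or.inl (by positivity))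

theorem exists_norm_le_mul_decayWeight_of_tendsto_div {E : Type*} [NormedAddCommGroup E]
    [ProperSpace E] {f : E → ℝ} (hf : Continuous f) {C₀ b s : ℝ} (hs : 0 ≤ s)
    (hasym : Tendsto (fun x => f x / (C₀ * exp (-b * ‖x‖) * ‖x‖ ^ (-s))) (cocompact E)
      (𝓝 1)) :
    ∃ M > 0, ∀ x, ‖f x‖ ≤ M * decayWeight b s ‖x‖ := by
  have hequiv : f =O[cocompact E] fun x => C₀ * exp (-b * ‖x‖) * ‖x‖ ^ (-s) :=
    (isEquivalent_of_tendsto_one hasym).isBigO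
  have hweight : (fun x => C₀ * exp (-b * ‖x‖) * ‖x‖ ^ (-s)) =O[cocompact E]
      fun x => decayWeight b s ‖x‖ := by
    refine IsBigO.of_bound (|C₀| * 2 ^ s)
      ((tendsto_norm_cocompact_atTop.eventually_ge_atTop 1).mono fun x hx => ?_)
    rw [norm_of_nonneg (decayWeight_pos b s (norm_nonneg x)).le, decayWeight, norm_mul, norm_mul,
      norm_eq_abs, norm_of_nonneg (exp_pos _).le, norm_of_nonneg (by positivity)]
    calc |C₀| * exp (-b * ‖x‖) * ‖x‖ ^ (-s)
        ≤ |C₀| * exp (-b * ‖x‖) * (2 ^ s * (1 + ‖x‖) ^ (-s)) := by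
          gcongr
          exact rpow_neg_le_two_rpow_mul_one_add_rpow_neg hx hs
      _ = |C₀| * 2 ^ s * (exp (-b * ‖x‖) * (1 + ‖x‖) ^ (-s)) := by ring
  exact hf.exists_norm_le_mul_of_isBigO_cocompact (continuous_decayWeight_norm b s)
    (fun x => decayWeight_pos b s (norm_nonneg x)) (hequiv.trans hweight)

theorem decayWeight_sq_mul_le {b s R t u : ℝ} (hb : 0 ≤ b) (hs : 0 ≤ s) (hR : 0 < R)
    (ht : 0 ≤ t) (hu : 0 ≤ u) (htu : 2 * R ≤ t + u) :
    decayWeight b s t ^ 2 * decayWeight b s u ≤ exp (-2 * b * R) * R ^ (-s) * exp (-b * t) := by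
  have hexp : exp (-b * t) ^ 2 * exp (-b * u) ≤ exp (-2 * b * R) * exp (-b * t) := by
    rw [← exp_nat_mul, ← exp_add, ← exp_add, exp_le_exp]
    push_cast
    nlinarith [mul_le_mul_of_nonneg_left htu hb]
  have hpoly : ((1 + t) ^ (-s)) ^ 2 * (1 + u) ^ (-s) ≤ R ^ (-s) := by
    have hle_one : (1 + t) ^ (-s) ≤ 1 :=
      rpow_le_one_of_one_le_of_nonpos (by linarith) (by linarith)
    have hprod : (1 + t) ^ (-s) * (1 + u) ^ (-s) ≤ R ^ (-s) := by
      rw [← mul_rpow (by linarith) (by linarith)]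
      exact rpow_le_rpow_of_nonpos hR (by nlinarith) (by linarith)
    calc ((1 + t) ^ (-s)) ^ 2 * (1 + u) ^ (-s)
        = (1 + t) ^ (-s) * ((1 + t) ^ (-s) * (1 + u) ^ (-s)) := by ring
      _ ≤ 1 * R ^ (-s) := by gcongr
      _ = R ^ (-s) := one_mul _
  calc decayWeight b s t ^ 2 * decayWeight b s u
      = (exp (-b * t) ^ 2 * exp (-b * u)) * (((1 + t) ^ (-s)) ^ 2 * (1 + u) ^ (-s)) := by
        unfold decayWeight
        ring
    _ ≤ (exp (-2 * b * R) * exp (-b * t)) * R ^ (-s) := by gcongr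
    _ = exp (-2 * b * R) * R ^ (-s) * exp (-b * t) := by ring

theorem norm_sq_mul_le_of_norm_le_decayWeight {E : Type*} [NormedAddCommGroup E] [NormedSpace ℝ E]
    {f : E → ℝ} {M b s : ℝ} (hM0 : 0 ≤ M) (hb : 0 ≤ b) (hs : 0 ≤ s)
    (hM : ∀ y, ‖f y‖ ≤ M * decayWeight b s ‖y‖) {a : E} (ha : 0 < ‖a‖) (x : E) :
    ‖f (x - a) ^ 2 * f (x + a)‖ ≤
      M ^ 3 * exp (-2 * b * ‖a‖) * ‖a‖ ^ (-s) * ‖exp (-b * ‖x - a‖)‖ := by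
  have hsep : 2 * ‖a‖ ≤ ‖x - a‖ + ‖x + a‖ := by
    calc 2 * ‖a‖ = ‖(x + a) - (x - a)‖ := by
          rw [add_sub_sub_cancel, ← two_smul ℝ a, norm_smul, Real.norm_two]
      _ ≤ ‖x - a‖ + ‖x + a‖ := (norm_sub_le _ _).trans_eq (add_comm _ _)
  calc ‖f (x - a) ^ 2 * f (x + a)‖ = ‖f (x - a)‖ ^ 2 * ‖f (x + a)‖ := by
        rw [norm_mul, norm_pow]
    _ ≤ (M * decayWeight b s ‖x - a‖) ^ 2 * (M * decayWeight b s ‖x + a‖) := by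
        gcongr
        exacts [hM _, hM _]
    _ = M ^ 3 * (decayWeight b s ‖x - a‖ ^ 2 * decayWeight b s ‖x + a‖) := by ring
    _ ≤ M ^ 3 * (exp (-2 * b * ‖a‖) * ‖a‖ ^ (-s) * exp (-b * ‖x - a‖)) :=
        mul_le_mul_of_nonneg_left
          (decayWeight_sq_mul_le hb hs ha (norm_nonneg _) (norm_nonneg _) hsep) (by positivity)
    _ = M ^ 3 * exp (-2 * b * ‖a‖) * ‖a‖ ^ (-s) * ‖exp (-b * ‖x - a‖)‖ := by
        rw [norm_of_nonneg (exp_pos _).le]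
        ring

theorem eLpNorm_le_ofReal_mul_of_norm_le_sub {G F F' : Type*} [MeasurableSpace G] [AddGroup G]
    [MeasurableAdd G] {μ : Measure G} [μ.IsAddRightInvariant] [NormedAddCommGroup F]
    [NormedAddCommGroup F'] {f : G → F} {g : G → F'} (hg : AEStronglyMeasurable g μ) {K : ℝ}
    (a : G) (h : ∀ x, ‖f x‖ ≤ K * ‖g (x - a)‖) (p : ENNReal) :
    eLpNorm f p μ ≤ ENNReal.ofReal K * eLpNorm g p μ := by
  rw [← eLpNorm_comp_measurePreserving hg (measurePreserving_sub_right μ a)]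
  exact eLpNorm_le_mul_eLpNorm_of_ae_le_mul (.of_forall h) p

theorem stmt10_general {N : ℕ} (hN : 0 < N) (ω₀ C₀ : ℝ)
    (hω₀ : 0 < ω₀)
    (U : EuclideanSpace ℝ (Fin N) → ℝ)
    (hUc : Continuous U)
    (hasym : Tendsto (fun x : EuclideanSpace ℝ (Fin N) =>
        U x / (C₀ * Real.exp (-(Real.sqrt ω₀) * ‖x‖) * ‖x‖ ^ (-((N : ℝ) - 1) / 2)))
      (cocompact (EuclideanSpace ℝ (Fin N))) (𝓝 1)) :
    ∃ C > (0 : ℝ), ∃ T : ℝ, ∀ ρ ε : ℝ, 0 < ε → 0 < ρ → T < ρ / ε →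
      eLpNorm (fun x : EuclideanSpace ℝ (Fin N) =>
          (U (x - (ρ / ε) • EuclideanSpace.single (⟨0, hN⟩ : Fin N) 1)) ^ 2 *
            U (x + (ρ / ε) • EuclideanSpace.single (⟨0, hN⟩ : Fin N) 1)) 2 volume
        ≤ ENNReal.ofReal
            (C * Real.exp (-2 * Real.sqrt ω₀ * (ρ / ε)) *
              (ρ / ε) ^ (-((N : ℝ) - 1) / 2)) := by
  have hs : 0 ≤ ((N : ℝ) - 1) / 2 := by
    have : (1 : ℝ) ≤ N := by exact_mod_cast hN
    linarith
  obtain ⟨M, hM0, hM⟩ :=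
    exists_norm_le_mul_decayWeight_of_tendsto_div hUc hs (by simpa only [neg_div] using hasym)
  set J := eLpNorm (fun x : EuclideanSpace ℝ (Fin N) => exp (-√ω₀ * ‖x‖)) 2 volume
  have hJ : J ≠ ⊤ := (memLp_two_exp_neg_mul_norm volume (sqrt_pos.2 hω₀)).eLpNorm_ne_top
  refine ⟨M ^ 3 * (J.toReal + 1), by positivity, 0, fun ρ ε _ _ hR => ?_⟩
  set a := (ρ / ε) • EuclideanSpace.single (⟨0, hN⟩ : Fin N) (1 : ℝ)
  have ha : ‖a‖ = ρ / ε := by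
    rw [norm_smul, PiLp.norm_single, norm_one, mul_one, norm_of_nonneg hR.le]
  have hpt := norm_sq_mul_le_of_norm_le_decayWeight hM0.le (sqrt_nonneg ω₀) hs hM (ha ▸ hR)
  simp only [ha] at hpt
  set K := M ^ 3 * exp (-2 * √ω₀ * (ρ / ε)) * (ρ / ε) ^ (-(((N : ℝ) - 1) / 2)) with hK
  calc _ ≤ ENNReal.ofReal K * J := eLpNorm_le_ofReal_mul_of_norm_le_sub (by fun_prop) a hpt 2
    _ ≤ ENNReal.ofReal K * ENNReal.ofReal (J.toReal + 1) := by
        gcongr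
        exact (ENNReal.le_ofReal_iff_toReal_le hJ (by positivity)).2 (by linarith)
    _ = _ := by
        rw [← ENNReal.ofReal_mul (by positivity), hK, neg_div]
        ring_nf

/-- interaction bound
`‖U_P² U_{−P}‖_{L²} ≤ C e^{−2√ω₀ρ/ε}(ρ/ε)^{−(N−1)/2}` for `ρ/ε` large, where
`U_{±P}(x) = U(x ∓ (ρ/ε)e₁)` and `U` is the ground state with the standard decay. -/
theorem stmt10 {N : ℕ} (hN : 0 < N) (ω₀ μ₂ C₀ : ℝ)
    (hω₀ : 0 < ω₀) (hμ₂ : 0 < μ₂) (hC₀ : 0 < C₀)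
    (U : EuclideanSpace ℝ (Fin N) → ℝ)
    (hUc : Continuous U) (hUpos : ∀ x, 0 < U x)
    (hUrad : ∀ x y : EuclideanSpace ℝ (Fin N), ‖x‖ = ‖y‖ → U x = U y)
    (heq : ∀ x, -lap U x + ω₀ * U x = μ₂ * (U x) ^ 3)
    (hasym : Tendsto (fun x : EuclideanSpace ℝ (Fin N) =>
        U x / (C₀ * Real.exp (-(Real.sqrt ω₀) * ‖x‖) * ‖x‖ ^ (-((N : ℝ) - 1) / 2)))
      (cocompact (EuclideanSpace ℝ (Fin N))) (𝓝 1)) :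
    ∃ C > (0 : ℝ), ∃ T : ℝ, ∀ ρ ε : ℝ, 0 < ε → 0 < ρ → T < ρ / ε →
      eLpNorm (fun x : EuclideanSpace ℝ (Fin N) =>
          (U (x - (ρ / ε) • EuclideanSpace.single (⟨0, hN⟩ : Fin N) 1)) ^ 2 *
            U (x + (ρ / ε) • EuclideanSpace.single (⟨0, hN⟩ : Fin N) 1)) 2 volume
        ≤ ENNReal.ofReal
            (C * Real.exp (-2 * Real.sqrt ω₀ * (ρ / ε)) *
              (ρ / ε) ^ (-((N : ℝ) - 1) / 2)) :=
  stmt10_general hN ω₀ C₀ hω₀ U hUc hasym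
end
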